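/- The variation relation ≈ is not transitive: there exist an IGMM M and states q₁, q₂, q₃ of M such that q₁ ≈ q₂ and q₂ ≈ q₃ but not q₁ ≈ q₃. -/
import Mathlib


/-- An incompletely specified generalized Mealy machine (IGMM) over input
propositions `I`, output propositions `O`, with state set `Q`.
Input valuations are `I → Bool`, output valuations are `O → Bool`.
`delta` is the partial transition function, `lam` the output function. -/
structure IGMM (I O Q : Type*) where
  init : Q
  delta : Q → (I → Bool) → Option Q
  lam : Q → (I → Bool) → Set (O → Bool)
  lam_nonempty : ∀ q i, (lam q i).Nonempty
  lam_top : ∀ q i, delta q i = none → lam q i = Set.univ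

namespace IGMM

/-- `(ι, o) ⊨ M_q` : either an infinite run, or a finite run ending where `delta`
is undefined. -/
def Sat {I O Q : Type*} (M : IGMM I O Q) (q : Q) (ι : ℕ → I → Bool)
    (o : ℕ → O → Bool) : Prop :=
  (∃ qs : ℕ → Q, qs 0 = q ∧
      ∀ j : ℕ, M.delta (qs j) (ι j) = some (qs (j + 1)) ∧ o j ∈ M.lam (qs j) (ι j)) ∨
  (∃ (k : ℕ) (qs : ℕ → Q), qs 0 = q ∧
      (∀ j < k, M.delta (qs j) (ι j) = some (qs (j + 1)) ∧ o j ∈ M.lam (qs j) (ι j)) ∧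
      M.delta (qs k) (ι k) = none)

/-- The behaviour set `Beh_M(q, ι) = {o | (ι, o) ⊨ M_q}`. -/
def Beh {I O Q : Type*} (M : IGMM I O Q) (q : Q) (ι : ℕ → I → Bool) :
    Set (ℕ → O → Bool) :=
  {o | M.Sat q ι o}

end IGMM

/-- `q' ⊑ q` : the state `q'` of `M'` is a specialization of the state `q` of `M`. -/
def IGMM.Specializes {I O Q' Q : Type*} (M' : IGMM I O Q') (q' : Q')
    (M : IGMM I O Q) (q : Q) : Prop :=
  ∀ ι : ℕ → I → Bool, M'.Beh q' ι ⊆ M.Beh q ι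

/-- `q' ≈ q` : the state `q'` of `M'` is a variation of the state `q` of `M`. -/
def IGMM.IsVariation {I O Q' Q : Type*} (M' : IGMM I O Q') (q' : Q')
    (M : IGMM I O Q) (q : Q) : Prop :=
  ∀ ι : ℕ → I → Bool, (M'.Beh q' ι ∩ M.Beh q ι).Nonempty

/-- the variation relation is not transitive. -/
theorem variation_not_transitive :
    ∃ (I O Q : Type) (_ : Fintype I) (_ : Fintype O) (_ : Fintype Q)
      (M : IGMM I O Q) (q₁ q₂ q₃ : Q),
      IGMM.IsVariation M q₁ M q₂ ∧ IGMM.IsVariation M q₂ M q₃ ∧ ¬ IGMM.IsVariation M q₁ M q₃ := by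
  classical
  refine ⟨Unit, Unit, Fin 3, inferInstance, inferInstance, inferInstance, ?_⟩
  set M : IGMM Unit Unit (Fin 3) :=
    { init := 0
      delta := fun q _ => if q = 1 then none else some q
      lam := fun q _ => if q = 0 then {fun _ => false} else if q = 2 then {fun _ => true} else Set.univ
      lam_nonempty := by
        intro q i
        fin_cases q <;> simp
      lam_top := by
        intro q i h
        fin_cases q <;> simp_all } with hM
  have hbeh2 : ∀ ι o, M.Sat 1 ι o := by
    intro ι o
    right
    exact ⟨0, fun _ => 1, rfl, by omega, by simp [hM]⟩
  have hbeh0 : ∀ ι, M.Sat 0 ι (fun _ _ => false) := by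
    intro ι
    left
    exact ⟨fun _ => 0, rfl, fun j => by simp [hM]⟩
  have hbeh2' : ∀ ι, M.Sat 2 ι (fun _ _ => true) := by
    intro ι
    left
    exact ⟨fun _ => 2, rfl, fun j => by simp [hM]⟩
  -- key: membership in Beh 0 forces o 0 = const false, Beh 2 forces const true
  have key : ∀ (q : Fin 3) (ι : ℕ → Unit → Bool) o, q ≠ 1 → M.Sat q ι o →
      o 0 ∈ M.lam q (ι 0) := by
    rintro q ι o hq (⟨qs, h0, h⟩ | ⟨k, qs, h0, h, hk⟩)
    · exact h0 ▸ (h 0).2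
    · rcases Nat.eq_zero_or_pos k with rfl | hkpos
      · exfalso
        rw [h0] at hk
        simp [hM, hq] at hk
      · exact h0 ▸ (h 0 hkpos).2
  refine ⟨M, 0, 1, 2, ?_, ?_, ?_⟩
  · intro ι
    exact ⟨fun _ _ => false, hbeh0 ι, hbeh2 ι _⟩
  · intro ι
    exact ⟨fun _ _ => true, hbeh2 ι _, hbeh2' ι⟩
  · intro h
    obtain ⟨o, h1, h3⟩ := h (fun _ _ => false)
    have e1 := key 0 _ o (by decide) h1
    have e3 := key 2 _ o (by decide) h3
    simp [hM] at e1 e3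
    have := congrFun e1 ()
    rw [e3] at this
    simp at this
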